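/- arXiv:math/0604454 — 2 statements merged into one kernel-verified Lean document; each statement's English description precedes it below -/
import Mathlib

section
/- Let K be a max cone in ℝ≥0^n, let T be a set of generators for K, let U ⊆ T and S = T \ U. Then S generates K if and only if every u ∈ T satisfies: for each j ∈ supp(u) there exists x ∈ S with j ∈ supp(x) such that x(j) ≤ u(j) (componentwise). -/
open scoped NNReal

/-- The max-algebraic span of `S`: all vectors `⨆_{x ∈ S} λ_x • x` where only
finitely many coefficients `λ_x` are nonzero (`MaxSpan ∅ = {0}`). -/
def MaxSpan {n : ℕ} (S : Set (Fin n → ℝ≥0)) : Set (Fin n → ℝ≥0) :=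
  {u | ∃ (F : Finset (Fin n → ℝ≥0)) (lam : (Fin n → ℝ≥0) → ℝ≥0),
    ↑F ⊆ S ∧ u = F.sup (fun x => lam x • x)}

/-- A max cone: a subset of `ℝ≥0ⁿ` closed under pointwise max `⊔` and under
multiplication by nonnegative scalars. -/
def MaxCone {n : ℕ} (K : Set (Fin n → ℝ≥0)) : Prop :=
  0 ∈ K ∧ (∀ x ∈ K, ∀ y ∈ K, x ⊔ y ∈ K) ∧ (∀ (c : ℝ≥0), ∀ x ∈ K, c • x ∈ K)

/-- `u` is an extremal in `K` if `u = v ⊔ w` with `v, w ∈ K` implies `u = v` or `u = w`. -/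
def IsExtremal {n : ℕ} (K : Set (Fin n → ℝ≥0)) (u : Fin n → ℝ≥0) : Prop :=
  u ∈ K ∧ ∀ v ∈ K, ∀ w ∈ K, u = v ⊔ w → u = v ∨ u = w

/-- A vector is scaled if its max norm `⨆ i, x i` equals `1`. -/
def Scaled {n : ℕ} (x : Fin n → ℝ≥0) : Prop := (⨆ i, x i) = 1

/-- The support of a vector. -/
def supp {n : ℕ} (v : Fin n → ℝ≥0) : Set (Fin n) := {j | 0 < v j}

/-- For `j ∈ supp u`, `rescale u j = (1 / u j) • u`, the `j`-scaling `u(j)`. -/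
noncomputable def rescale {n : ℕ} (u : Fin n → ℝ≥0) (j : Fin n) : Fin n → ℝ≥0 :=
  (u j)⁻¹ • u

/-- `T(j) = {u(j) : u ∈ T, j ∈ supp u}`. -/
noncomputable def setScale {n : ℕ} (T : Set (Fin n → ℝ≥0)) (j : Fin n) :
    Set (Fin n → ℝ≥0) :=
  {y | ∃ u ∈ T, j ∈ supp u ∧ y = rescale u j}

/-- `u` is minimal in `T` if `v ∈ T` and `v ≤ u` imply `v = u`. -/
def MinimalIn {n : ℕ} (T : Set (Fin n → ℝ≥0)) (u : Fin n → ℝ≥0) : Prop :=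
  u ∈ T ∧ ∀ v ∈ T, v ≤ u → v = u

/-- A set is totally dependent if each of its elements is a max combination of
the remaining ones. -/
def TotallyDependent {n : ℕ} (S : Set (Fin n → ℝ≥0)) : Prop :=
  ∀ x ∈ S, x ∈ MaxSpan (S \ {x})

/-- A set is independent if none of its elements is a max combination of
the remaining ones. -/
def IndependentSet {n : ℕ} (S : Set (Fin n → ℝ≥0)) : Prop :=
  ∀ x ∈ S, x ∉ MaxSpan (S \ {x})

/-- A basis for `K` is an independent set of generators for `K`. -/
def IsBasis {n : ℕ} (S K : Set (Fin n → ℝ≥0)) : Prop :=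
  IndependentSet S ∧ MaxSpan S = K

/-! In a max combination `u = ⨆ λ_x • x`, each coordinate `u_j > 0` is attained by a single
term, and `λ_x • x ≤ u` with `λ_x x_j = u_j` says exactly `x(j) ≤ u(j)`. Conversely, if every
`j ∈ supp u` has such an `x_j ∈ S`, then `u = ⨆_{j ∈ supp u} u_j • x_j(j)`. Since `≤` is
transitive, this criterion shows `span T ⊆ span S ↔ T ⊆ span S`, and `S ⊆ T` gives the other
inclusion. -/

lemma maxSpan_mono {n : ℕ} {S T : Set (Fin n → ℝ≥0)} (h : S ⊆ T) :
    MaxSpan S ⊆ MaxSpan T := by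
  rintro u ⟨F, lam, hFS, rfl⟩
  exact ⟨F, lam, hFS.trans h, rfl⟩

lemma subset_maxSpan {n : ℕ} (S : Set (Fin n → ℝ≥0)) : S ⊆ MaxSpan S := by
  intro u hu
  refine ⟨{u}, fun _ => 1, by simpa, ?_⟩
  rw [Finset.sup_singleton, one_smul]

lemma mem_supp_iff {n : ℕ} {v : Fin n → ℝ≥0} {j : Fin n} : j ∈ supp v ↔ v j ≠ 0 :=
  pos_iff_ne_zero (a := v j)

lemma finset_sup_smul_mem_maxSpan {n : ℕ} {S : Set (Fin n → ℝ≥0)} {ι : Type*}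
    (t : Finset ι) (c : ι → ℝ≥0) (f : ι → Fin n → ℝ≥0) (hf : ∀ i ∈ t, f i ∈ S) :
    t.sup (fun i => c i • f i) ∈ MaxSpan S := by
  classical
  -- the coefficient of a vector `y` collects the coefficients of all indices `i` with `f i = y`
  refine ⟨t.image f, fun y => (t.filter (f · = y)).sup c, ?_, le_antisymm ?_ ?_⟩
  · simpa [Set.subset_def] using hf
  · refine Finset.sup_le fun i hi => ?_
    calc c i • f i ≤ (t.filter (f · = f i)).sup c • f i :=
          smul_le_smul_of_nonneg_right (Finset.le_sup (Finset.mem_filter.2 ⟨hi, rfl⟩)) bot_le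
      _ ≤ _ := Finset.le_sup (f := fun y => (t.filter (f · = y)).sup c • y)
          (Finset.mem_image_of_mem f hi)
  · refine Finset.sup_le fun y hy k => ?_
    rw [Pi.smul_apply, smul_eq_mul, NNReal.finset_sup_mul]
    refine Finset.sup_le fun i hi => ?_
    obtain ⟨hit, rfl⟩ := Finset.mem_filter.1 hi
    exact Finset.le_sup (f := fun i => c i • f i) hit k

lemma rescale_le_rescale_iff {n : ℕ} {x u : Fin n → ℝ≥0} {j : Fin n}
    (hx : x j ≠ 0) (hu : u j ≠ 0) :
    rescale x j ≤ rescale u j ↔ (u j / x j) • x ≤ u := by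
  refine forall_congr' fun k => ?_
  simp only [rescale, Pi.smul_apply, smul_eq_mul, ← div_eq_inv_mul]
  rw [div_le_div_iff₀ (pos_iff_ne_zero.2 hx) (pos_iff_ne_zero.2 hu), div_mul_eq_mul_div,
    div_le_iff₀ (pos_iff_ne_zero.2 hx), mul_comm (x k)]

lemma exists_rescale_le_of_mem_maxSpan {n : ℕ} {S : Set (Fin n → ℝ≥0)} {u : Fin n → ℝ≥0}
    (hu : u ∈ MaxSpan S) {j : Fin n} (hj : j ∈ supp u) :
    ∃ x ∈ S, j ∈ supp x ∧ rescale x j ≤ rescale u j := by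
  obtain ⟨F, lam, hFS, rfl⟩ := hu
  rw [mem_supp_iff] at hj
  have hF : F.Nonempty := Finset.nonempty_iff_ne_empty.2 (by rintro rfl; exact hj rfl)
  obtain ⟨y, hyF, hy⟩ := Finset.exists_mem_eq_sup F hF (fun x => lam x * x j)
  have huj : (F.sup fun x => lam x • x) j = lam y * y j := by
    rw [Finset.sup_apply]; exact hy
  rw [huj] at hj
  have hyj : y j ≠ 0 := right_ne_zero_of_mul hj
  refine ⟨y, hFS hyF, mem_supp_iff.2 hyj, (rescale_le_rescale_iff hyj (huj ▸ hj)).2 ?_⟩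
  rw [huj, mul_div_cancel_right₀ _ hyj]
  exact Finset.le_sup (f := fun x => lam x • x) hyF

lemma mem_maxSpan_of_forall_exists_rescale_le {n : ℕ} {S : Set (Fin n → ℝ≥0)}
    {u : Fin n → ℝ≥0} (h : ∀ j ∈ supp u, ∃ x ∈ S, j ∈ supp x ∧ rescale x j ≤ rescale u j) :
    u ∈ MaxSpan S := by
  classical
  choose X hXS hXj hXle using h
  have hu : u = (Finset.univ : Finset (supp u)).sup fun j => (u j / X j j.2 j) • X j j.2 := by
    refine le_antisymm (fun k => ?_) (Finset.sup_le fun j _ => ?_)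
    · by_cases hk : u k = 0
      · simp [hk]
      have hk : k ∈ supp u := mem_supp_iff.2 hk
      calc u k = ((u k / X k hk k) • X k hk) k := by
            simp [div_mul_cancel₀ _ (mem_supp_iff.1 (hXj k hk))]
        _ ≤ _ := Finset.le_sup (f := fun j : supp u => (u j / X j j.2 j) • X j j.2)
            (Finset.mem_univ ⟨k, hk⟩) k
    · exact (rescale_le_rescale_iff (mem_supp_iff.1 (hXj j j.2)) (mem_supp_iff.1 j.2)).1
        (hXle j j.2)
  rw [hu]
  exact finset_sup_smul_mem_maxSpan _ _ _ fun j _ => hXS j j.2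

lemma mem_maxSpan_iff {n : ℕ} {S : Set (Fin n → ℝ≥0)} {u : Fin n → ℝ≥0} :
    u ∈ MaxSpan S ↔ ∀ j ∈ supp u, ∃ x ∈ S, j ∈ supp x ∧ rescale x j ≤ rescale u j :=
  ⟨fun hu _ hj => exists_rescale_le_of_mem_maxSpan hu hj,
    mem_maxSpan_of_forall_exists_rescale_le⟩

lemma maxSpan_subset_maxSpan_iff {n : ℕ} {S T : Set (Fin n → ℝ≥0)} :
    MaxSpan T ⊆ MaxSpan S ↔ T ⊆ MaxSpan S := by
  refine ⟨(subset_maxSpan T).trans, fun hT v hv => mem_maxSpan_iff.2 fun j hj => ?_⟩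
  obtain ⟨w, hwT, hjw, hwv⟩ := mem_maxSpan_iff.1 hv j hj
  obtain ⟨x, hxS, hjx, hxw⟩ := mem_maxSpan_iff.1 (hT hwT) j hjw
  exact ⟨x, hxS, hjx, hxw.trans hwv⟩

theorem stmt2_general {n : ℕ} (K : Set (Fin n → ℝ≥0))
    (T U S : Set (Fin n → ℝ≥0)) (hT : MaxSpan T = K)
    (hS : S = T \ U) :
    MaxSpan S = K ↔
      ∀ u ∈ T, ∀ j ∈ supp u, ∃ x ∈ S, j ∈ supp x ∧ rescale x j ≤ rescale u j := by
  have hST : MaxSpan S ⊆ MaxSpan T := maxSpan_mono (hS ▸ Set.sdiff_subset)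
  rw [← hT, subset_antisymm_iff, and_iff_right hST, maxSpan_subset_maxSpan_iff]
  exact forall₂_congr fun u _ => mem_maxSpan_iff

/-- for a generating set `T` of the max cone `K`, `U ⊆ T` and
`S = T \ U`, the set `S` generates `K` iff each `u ∈ T` satisfies: for every
`j ∈ supp u` there is `x ∈ S` with `j ∈ supp x` and `x(j) ≤ u(j)`. -/
theorem stmt2 {n : ℕ} (K : Set (Fin n → ℝ≥0)) (hK : MaxCone K)
    (T U S : Set (Fin n → ℝ≥0)) (hT : MaxSpan T = K) (hU : U ⊆ T)
    (hS : S = T \ U) :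
    MaxSpan S = K ↔
      ∀ u ∈ T, ∀ j ∈ supp u, ∃ x ∈ S, j ∈ supp x ∧ rescale x j ≤ rescale u j :=
  stmt2_general K T U S hT hS
end

section
/- Let K be a max cone in ℝ≥0^n generated by S, and let u ∈ S with u ≠ 0. Then the following are equivalent: (1) u is an extremal in K; (2) for some j ∈ supp(u), u(j) is minimal in K(j); (3) for some j ∈ supp(u), u(j) is minimal in S(j). -/
/-!
Extremality of `u` can be tested in a single coordinate `j ∈ supp u`. If `u(j)` is minimal in
`K(j)` and `u = v ⊔ w`, one of `v, w` agrees with `u` at `j`, say `v`; then `v(j) ≤ u(j)`, so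
`v(j) = u(j)` and `v = u`. Conversely, if no `u(j)` is minimal, pick `y_j ∈ K(j)` with
`y_j < u(j)` for each `j ∈ supp u`; then `u = ⨆ⱼ u_j • y_j`, and extremality forces
`u = u_j • y_j`, i.e. `y_j = u(j)`, for some `j`. Finally, minimality in `S(j)` and in `K(j)`
agree because the `j`-th coordinate of a max combination is attained by a single term.
-/

open scoped NNReal

variable {n : ℕ}

lemma mem_maxSpan_of_mem {S : Set (Fin n → ℝ≥0)} {x : Fin n → ℝ≥0} (hx : x ∈ S) :
    x ∈ MaxSpan S := by
  classical
  refine ⟨{x}, fun _ => 1, by simpa using hx, ?_⟩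
  rw [Finset.sup_singleton, one_smul]

lemma exists_smul_le_apply_eq_of_mem_maxSpan {S : Set (Fin n → ℝ≥0)} {v : Fin n → ℝ≥0}
    (hv : v ∈ MaxSpan S) (j : Fin n) (hvj : 0 < v j) :
    ∃ x ∈ S, ∃ c : ℝ≥0, c • x ≤ v ∧ (c • x) j = v j := by
  obtain ⟨F, lam, hFS, rfl⟩ := hv
  have hF : F.Nonempty := by
    rcases F.eq_empty_or_nonempty with rfl | hF
    · simp at hvj
    · exact hF
  obtain ⟨x, hxF, hx⟩ := F.exists_mem_eq_sup hF fun x => (lam x • x) j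
  exact ⟨x, hFS hxF, lam x, Finset.le_sup (f := fun x => lam x • x) hxF,
    by rw [Finset.sup_apply, hx]⟩

lemma MaxCone.finset_sup_mem {K : Set (Fin n → ℝ≥0)} (hK : MaxCone K) {α : Type*}
    (F : Finset α) {f : α → Fin n → ℝ≥0} (hf : ∀ a ∈ F, f a ∈ K) : F.sup f ∈ K :=
  Finset.sup_induction hK.1 hK.2.1 hf

lemma IsExtremal.exists_eq_of_eq_finset_sup {K : Set (Fin n → ℝ≥0)} (hK : MaxCone K)
    {u : Fin n → ℝ≥0} (hu : IsExtremal K u) (hu0 : u ≠ 0) {α : Type*} [DecidableEq α]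
    (F : Finset α) {f : α → Fin n → ℝ≥0} (hf : ∀ a ∈ F, f a ∈ K) (huF : u = F.sup f) :
    ∃ a ∈ F, u = f a := by
  induction F using Finset.induction_on with
  | empty => exact absurd huF hu0
  | insert a F _ ih =>
    rw [Finset.sup_insert] at huF
    have hfF : ∀ b ∈ F, f b ∈ K := fun b hb => hf b (Finset.mem_insert_of_mem hb)
    rcases hu.2 _ (hf a (Finset.mem_insert_self a F)) _ (hK.finset_sup_mem F hfF) huF
      with h | h
    · exact ⟨a, Finset.mem_insert_self a F, h⟩
    · obtain ⟨b, hb, hub⟩ := ih hfF h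
      exact ⟨b, Finset.mem_insert_of_mem hb, hub⟩

section Rescale

variable {u v x : Fin n → ℝ≥0} {j : Fin n}

lemma smul_rescale (hj : u j ≠ 0) : u j • rescale u j = u := by
  rw [rescale, smul_smul, mul_inv_cancel₀ hj, one_smul]

lemma rescale_apply_self (hj : u j ≠ 0) : rescale u j j = 1 :=
  inv_mul_cancel₀ hj

lemma rescale_smul {c : ℝ≥0} (hc : c ≠ 0) : rescale (c • x) j = rescale x j := by
  rw [rescale, rescale, Pi.smul_apply, smul_eq_mul, smul_smul, mul_inv, mul_right_comm,
    inv_mul_cancel₀ hc, one_mul]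

lemma rescale_eq_self (hj : x j = 1) : rescale x j = x := by
  rw [rescale, hj, inv_one, one_smul]

lemma rescale_le_rescale (hvu : v ≤ u) (hvj : v j = u j) : rescale v j ≤ rescale u j := by
  rw [rescale, rescale, hvj]
  exact smul_le_smul_of_nonneg_left hvu zero_le

lemma eq_of_rescale_eq (hj : u j ≠ 0) (hvj : v j = u j) (h : rescale v j = rescale u j) :
    v = u := by
  rw [← smul_rescale hj, ← smul_rescale (hvj ▸ hj : v j ≠ 0), h, hvj]

lemma apply_self_of_mem_setScale {T : Set (Fin n → ℝ≥0)} {y : Fin n → ℝ≥0}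
    (hy : y ∈ setScale T j) : y j = 1 := by
  obtain ⟨w, -, hw, rfl⟩ := hy
  exact rescale_apply_self hw.ne'

lemma MaxCone.setScale_subset {K : Set (Fin n → ℝ≥0)} (hK : MaxCone K) (j : Fin n) :
    setScale K j ⊆ K := by
  rintro _ ⟨w, hw, -, rfl⟩
  exact hK.2.2 _ w hw

lemma setScale_mono {S T : Set (Fin n → ℝ≥0)} (hST : S ⊆ T) (j : Fin n) :
    setScale S j ⊆ setScale T j := by
  rintro _ ⟨w, hw, hwj, rfl⟩
  exact ⟨w, hST hw, hwj, rfl⟩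

end Rescale

lemma MinimalIn.anti {S T : Set (Fin n → ℝ≥0)} {x : Fin n → ℝ≥0} (h : MinimalIn T x)
    (hST : S ⊆ T) (hx : x ∈ S) : MinimalIn S x :=
  ⟨hx, fun y hy => h.2 y (hST hy)⟩

lemma eq_sup_smul_of_le_rescale (u : Fin n → ℝ≥0) (y : Fin n → Fin n → ℝ≥0)
    (hy : ∀ j, 0 < u j → y j ≤ rescale u j ∧ y j j = 1) :
    u = Finset.univ.sup fun j => u j • y j := by
  refine le_antisymm (fun k => ?_) (Finset.sup_le fun j _ => ?_)
  · rcases eq_zero_or_pos (u k) with hk | hk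
    · exact hk ▸ zero_le
    · calc u k = (u k • y k) k := by simp [(hy k hk).2]
        _ ≤ (Finset.univ.sup fun j => u j • y j) k :=
          Finset.le_sup (f := fun j => u j • y j) (Finset.mem_univ k) k
  · rcases eq_zero_or_pos (u j) with hj | hj
    · rw [hj, zero_smul]
      exact zero_le
    · calc u j • y j ≤ u j • rescale u j :=
          smul_le_smul_of_nonneg_left (hy j hj).1 zero_le
        _ = u := smul_rescale hj.ne'

lemma IsExtremal.exists_minimalIn_setScale {K : Set (Fin n → ℝ≥0)} (hK : MaxCone K)
    {u : Fin n → ℝ≥0} (hu : IsExtremal K u) (hu0 : u ≠ 0) :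
    ∃ j ∈ supp u, MinimalIn (setScale K j) (rescale u j) := by
  by_contra! hnot
  -- stated for every `j`, vacuously off `supp u`, so that `choose` yields a total family
  have hsmaller : ∀ j, ∃ y, 0 < u j →
      y ∈ setScale K j ∧ y ≤ rescale u j ∧ y ≠ rescale u j := fun j => by
    by_cases hj : 0 < u j
    · have := hnot j hj
      simp only [MinimalIn, not_and, not_forall, exists_prop] at this
      obtain ⟨y, hyK, hyu, hne⟩ := this ⟨u, hu.1, hj, rfl⟩
      exact ⟨y, fun _ => ⟨hyK, hyu, hne⟩⟩
    · exact ⟨0, fun h => absurd h hj⟩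
  choose y hy using hsmaller
  have hdecomp := eq_sup_smul_of_le_rescale u y fun j hj =>
    ⟨(hy j hj).2.1, apply_self_of_mem_setScale (hy j hj).1⟩
  have hterms : ∀ j ∈ Finset.univ, u j • y j ∈ K := fun j _ => by
    by_cases hj : 0 < u j
    · exact hK.2.2 _ _ (hK.setScale_subset j (hy j hj).1)
    · rw [not_lt.mp hj |>.antisymm zero_le, zero_smul]
      exact hK.1
  obtain ⟨j, -, huj⟩ := hu.exists_eq_of_eq_finset_sup hK hu0 _ hterms hdecomp
  have hj : u j ≠ 0 := fun h => hu0 (by rw [huj, h, zero_smul])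
  have hyj := hy j (pos_iff_ne_zero.mpr hj)
  refine hyj.2.2 ?_
  rw [huj, rescale_smul hj, rescale_eq_self (apply_self_of_mem_setScale hyj.1)]

lemma isExtremal_of_minimalIn_setScale {K : Set (Fin n → ℝ≥0)} {u : Fin n → ℝ≥0}
    (huK : u ∈ K) {j : Fin n} (hj : 0 < u j) (hmin : MinimalIn (setScale K j) (rescale u j)) :
    IsExtremal K u := by
  have heq_of_le : ∀ v ∈ K, v ≤ u → v j = u j → u = v := fun v hv hvu hvj =>
    (eq_of_rescale_eq hj.ne' hvj <|
      hmin.2 _ ⟨v, hv, (hvj ▸ hj : 0 < v j), rfl⟩ (rescale_le_rescale hvu hvj)).symm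
  refine ⟨huK, fun v hv w hw huvw => ?_⟩
  have hvu : v ≤ u := huvw ▸ le_sup_left
  have hwu : w ≤ u := huvw ▸ le_sup_right
  have huj : u j = v j ⊔ w j := congrFun huvw j
  rcases le_total (w j) (v j) with hwv | hvw
  · exact Or.inl (heq_of_le v hv hvu (by rw [huj, sup_eq_left.mpr hwv]))
  · exact Or.inr (heq_of_le w hw hwu (by rw [huj, sup_eq_right.mpr hvw]))

lemma minimalIn_setScale_maxSpan {S : Set (Fin n → ℝ≥0)} {u : Fin n → ℝ≥0} (huS : u ∈ S)
    {j : Fin n} (hj : 0 < u j) (hmin : MinimalIn (setScale S j) (rescale u j)) :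
    MinimalIn (setScale (MaxSpan S) j) (rescale u j) := by
  refine ⟨⟨u, mem_maxSpan_of_mem huS, hj, rfl⟩, ?_⟩
  rintro _ ⟨v, hv, hvj, rfl⟩ hvu
  obtain ⟨x, hxS, c, hcxv, hcxj⟩ := exists_smul_le_apply_eq_of_mem_maxSpan hv j hvj
  have hcx : c * x j ≠ 0 := by
    rw [← smul_eq_mul, ← Pi.smul_apply, hcxj]
    exact hvj.ne'
  have hxv : rescale x j ≤ rescale v j := by
    rw [← rescale_smul (left_ne_zero_of_mul hcx)]
    exact rescale_le_rescale hcxv hcxj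
  have hxu : rescale x j = rescale u j :=
    hmin.2 _ ⟨x, hxS, pos_iff_ne_zero.mpr (right_ne_zero_of_mul hcx), rfl⟩ (hxv.trans hvu)
  exact hvu.antisymm (hxu ▸ hxv)

/-- for a max cone `K` generated by `S` and a nonzero `u ∈ S`,
the following are equivalent: (1) `u` is extremal in `K`;
(2) `u(j)` is minimal in `K(j)` for some `j ∈ supp u`;
(3) `u(j)` is minimal in `S(j)` for some `j ∈ supp u`. -/
theorem stmt5 {n : ℕ} (K S : Set (Fin n → ℝ≥0)) (hK : MaxCone K)
    (hgen : MaxSpan S = K) (u : Fin n → ℝ≥0) (huS : u ∈ S) (hu0 : u ≠ 0) :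
    (IsExtremal K u ↔ ∃ j ∈ supp u, MinimalIn (setScale K j) (rescale u j)) ∧
    ((∃ j ∈ supp u, MinimalIn (setScale K j) (rescale u j)) ↔
      ∃ j ∈ supp u, MinimalIn (setScale S j) (rescale u j)) := by
  have hSK : S ⊆ K := fun x hx => hgen ▸ mem_maxSpan_of_mem hx
  refine ⟨⟨fun hext => hext.exists_minimalIn_setScale hK hu0, ?_⟩, ⟨?_, ?_⟩⟩
  · rintro ⟨j, hj, hmin⟩
    exact isExtremal_of_minimalIn_setScale (hSK huS) hj hmin
  · rintro ⟨j, hj, hmin⟩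
    exact ⟨j, hj, hmin.anti (setScale_mono hSK j) ⟨u, huS, hj, rfl⟩⟩
  · rintro ⟨j, hj, hmin⟩
    exact ⟨j, hj, hgen ▸ minimalIn_setScale_maxSpan huS hj hmin⟩
end
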